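/- Let M > 0, ε ∈ (0,1], ρ ∈ [0, M], N = ⌊ρ/ε⌋, and let f, Π : [0,M] → [0,1] be measurable with ∫₀^M f = ∫₀^M Π = ρ. Suppose ∫₀^M η_ε (f - Π) dv ≤ δ for the step function η_ε(v) = ⌊v/ε⌋ + 1, that Π is a minimizer of g ↦ ∫ η_ε g over [0,1]-valued g of mass ρ, and that Π ≥ f on [Nε, (N+1)ε] (with (N+1)ε ≤ M). Then ∫₀^M |f - Π| dv ≤ 3δ/ε. In particular, if a sequence f_n of such densities satisfies ∫ η_ε (f_n - Π_n) dv → 0, then ‖f_n - Π_n‖_{L¹([0,M])} → 0. -/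

import Mathlib

/-!
The weight `η = ⌊v/ε⌋ + 1` is integer valued, so the line splits into the levels `η ≤ N`,
`η = N + 1` and `η ≥ N + 2`. Comparing `η` with the step weight `N + 1 + 1_{η ≥ N+2} - 1_{η ≤ N}`
shows that for every admissible `g` of mass `ρ`, `∫ η g - ∫ η 1_{[0,ρ)}` dominates the mass of `g`
on the upper levels plus the mass missing on the lower ones. As `Π` is a minimizer this excess
vanishes for `Π`, and it is at most the entropy production for `f`. Since `f` and `Π` have equal
mass, `∫ |f - Π| = 2 ∫ (f - Π)⁺`, and `(f - Π)⁺` lives on the outer levels (as `f ≤ Π` on the middle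
one), where it is bounded by these excesses. Hence `∫ |f - Π| ≤ 2 ∫ η (f - Π) ≤ 3δ/ε`.
-/

open MeasureTheory Set Filter

section Bathtub

variable {α : Type*} {η : α → ℤ} {k : ℤ} {f g u P : α → ℝ}

/-- Minimizers of `g ↦ ∫ η g` among `[0, 1]`-valued densities of prescribed mass equal `1` on
`η ≤ k` and `0` on `η ≥ k + 2` (bathtub principle); this penalizes deviations from that shape. -/
def bathtubExcess (η : α → ℤ) (k : ℤ) (g : α → ℝ) (v : α) : ℝ :=
  if k + 2 ≤ η v then g v else if η v ≤ k then 1 - g v else 0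

lemma bathtubExcess_mem_Icc (hg01 : ∀ v, g v ∈ Icc (0 : ℝ) 1) (v : α) :
    bathtubExcess η k g v ∈ Icc (0 : ℝ) 1 := by
  obtain ⟨hg0, hg1⟩ := hg01 v
  unfold bathtubExcess
  split_ifs <;> constructor <;> linarith

variable [MeasurableSpace α] {μ : Measure α}

lemma measurable_bathtubExcess (hη : Measurable η) (hg : Measurable g) :
    Measurable (bathtubExcess η k g) :=
  .ite (hη measurableSet_Ici) hg (.ite (hη measurableSet_Iic) (measurable_const.sub hg)
    measurable_const)

lemma MeasureTheory.Integrable.mul_of_abs_le_one {w h : α → ℝ} (hw : Integrable w μ)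
    (hh : Measurable h) (hh1 : ∀ v, |h v| ≤ 1) : Integrable (fun v => w v * h v) μ :=
  hw.mul_bdd hh.aestronglyMeasurable (ae_of_all _ hh1)

lemma abs_le_one_of_mem_Icc {x : ℝ} (hx : x ∈ Icc (0 : ℝ) 1) : |x| ≤ 1 :=
  abs_le.2 ⟨by linarith [hx.1], hx.2⟩

lemma integrable_of_mem_Icc [IsFiniteMeasure μ] (hg : Measurable g)
    (hg01 : ∀ v, g v ∈ Icc (0 : ℝ) 1) : Integrable g μ :=
  .of_bound hg.aestronglyMeasurable 1 <| ae_of_all _ fun v => abs_le_one_of_mem_Icc (hg01 v)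

lemma integral_mul_sub {w : α → ℝ} (hw : Integrable w μ) (hg : Measurable g)
    (hg01 : ∀ v, g v ∈ Icc (0 : ℝ) 1) (hu : Measurable u) (hu01 : ∀ v, u v ∈ Icc (0 : ℝ) 1) :
    ∫ v, w v * (g v - u v) ∂μ = (∫ v, w v * g v ∂μ) - ∫ v, w v * u v ∂μ := by
  simp_rw [mul_sub]
  exact integral_sub (hw.mul_of_abs_le_one hg fun v => abs_le_one_of_mem_Icc (hg01 v))
    (hw.mul_of_abs_le_one hu fun v => abs_le_one_of_mem_Icc (hu01 v))

variable [IsFiniteMeasure μ]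

lemma integral_bathtubExcess_le_integral_mul_sub (hη : Measurable η)
    (hηi : Integrable (fun v => (η v : ℝ)) μ) (hg : Measurable g) (hg01 : ∀ v, g v ∈ Icc (0 : ℝ) 1)
    (hu : Measurable u) (hu01 : ∀ v, u v ∈ Icc (0 : ℝ) 1) (hmass : ∫ v, g v ∂μ = ∫ v, u v ∂μ)
    (hu_one : ∀ v, η v ≤ k → u v = 1) (hu_zero : ∀ v, k + 2 ≤ η v → u v = 0) :
    ∫ v, bathtubExcess η k g v ∂μ ≤ ∫ v, (η v : ℝ) * (g v - u v) ∂μ := by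
  have hgi : Integrable g μ := integrable_of_mem_Icc hg hg01
  have hui : Integrable u μ := integrable_of_mem_Icc hu hu01
  have hkgu : Integrable (fun v => (k + 1 : ℝ) * (g v - u v)) μ := (hgi.sub hui).const_mul _
  have hEi : Integrable (bathtubExcess η k g) μ :=
    integrable_of_mem_Icc (measurable_bathtubExcess hη hg) (bathtubExcess_mem_Icc hg01)
  have hηgu : Integrable (fun v => (η v : ℝ) * (g v - u v)) μ :=
    hηi.mul_of_abs_le_one (hg.sub hu) fun v => abs_sub_le_iff.2
      ⟨by linarith [(hg01 v).2, (hu01 v).1], by linarith [(hg01 v).1, (hu01 v).2]⟩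
  -- `η` differs from the constant `k + 1` only where `g - u` has a sign
  have pointwise : ∀ v, (k + 1 : ℝ) * (g v - u v) + bathtubExcess η k g v ≤
      (η v : ℝ) * (g v - u v) := by
    intro v
    obtain ⟨hg0, hg1⟩ := hg01 v
    unfold bathtubExcess
    obtain hA | hC | hB : η v ≤ k ∨ η v = k + 1 ∨ k + 2 ≤ η v := by omega
    · have hηk : (η v : ℝ) ≤ k := by exact_mod_cast hA
      rw [if_neg (by omega), if_pos hA, hu_one v hA]
      nlinarith
    · rw [if_neg (by omega), if_neg (by omega), hC]
      push_cast
      linarith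
    · have hηk : (k + 2 : ℝ) ≤ η v := by exact_mod_cast hB
      rw [if_pos hB, hu_zero v hB]
      nlinarith
  calc ∫ v, bathtubExcess η k g v ∂μ
      = ∫ v, ((k + 1 : ℝ) * (g v - u v) + bathtubExcess η k g v) ∂μ := by
        rw [integral_add hkgu hEi, integral_const_mul, integral_sub hgi hui, hmass, sub_self,
          mul_zero, zero_add]
    _ ≤ ∫ v, (η v : ℝ) * (g v - u v) ∂μ := integral_mono (hkgu.add hEi) hηgu pointwise

lemma integral_abs_sub_le_two_mul_integral_bathtubExcess (hη : Measurable η)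
    (hf : Measurable f) (hf01 : ∀ v, f v ∈ Icc (0 : ℝ) 1) (hP : Measurable P)
    (hP01 : ∀ v, P v ∈ Icc (0 : ℝ) 1) (hmass : ∫ v, f v ∂μ = ∫ v, P v ∂μ)
    (hmid : ∀ v, η v = k + 1 → f v ≤ P v) :
    ∫ v, |f v - P v| ∂μ ≤
      2 * ((∫ v, bathtubExcess η k f v ∂μ) + ∫ v, bathtubExcess η k P v ∂μ) := by
  have hfi : Integrable f μ := integrable_of_mem_Icc hf hf01
  have hPi : Integrable P μ := integrable_of_mem_Icc hP hP01
  have hEf : Integrable (bathtubExcess η k f) μ :=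
    integrable_of_mem_Icc (measurable_bathtubExcess hη hf) (bathtubExcess_mem_Icc hf01)
  have hEP : Integrable (bathtubExcess η k P) μ :=
    integrable_of_mem_Icc (measurable_bathtubExcess hη hP) (bathtubExcess_mem_Icc hP01)
  have hE : Integrable (fun v => 2 * (bathtubExcess η k f v + bathtubExcess η k P v)) μ :=
    (hEf.add hEP).const_mul 2
  have hPf : Integrable (fun v => P v - f v) μ := hPi.sub hfi
  -- `|x| = 2 x⁺ - x`, and `(f - P)⁺` is dominated by the excess of `f` or of `P`
  have pointwise : ∀ v, |f v - P v| ≤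
      2 * (bathtubExcess η k f v + bathtubExcess η k P v) + (P v - f v) := by
    intro v
    obtain ⟨hf0, hf1⟩ := hf01 v
    obtain ⟨hP0, hP1⟩ := hP01 v
    unfold bathtubExcess
    obtain hA | hC | hB : η v ≤ k ∨ η v = k + 1 ∨ k + 2 ≤ η v := by omega
    · rw [if_neg (by omega), if_pos hA, if_neg (by omega), if_pos hA, abs_le]
      constructor <;> linarith
    · rw [if_neg (by omega), if_neg (by omega), if_neg (by omega), if_neg (by omega),
        abs_of_nonpos (by linarith [hmid v hC])]
      linarith
    · rw [if_pos hB, if_pos hB, abs_le]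
      constructor <;> linarith
  calc ∫ v, |f v - P v| ∂μ
      ≤ ∫ v, (2 * (bathtubExcess η k f v + bathtubExcess η k P v) + (P v - f v)) ∂μ :=
        integral_mono (hfi.sub hPi).abs (hE.add hPf) pointwise
    _ = 2 * ((∫ v, bathtubExcess η k f v ∂μ) + ∫ v, bathtubExcess η k P v ∂μ) := by
        rw [integral_add hE hPf, integral_const_mul,
          integral_add hEf hEP, integral_sub hPi hfi, hmass, sub_self, add_zero]

theorem integral_abs_sub_le_two_mul_integral_mul_sub (hη : Measurable η)
    (hηi : Integrable (fun v => (η v : ℝ)) μ) (hf : Measurable f) (hf01 : ∀ v, f v ∈ Icc (0 : ℝ) 1)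
    (hP : Measurable P) (hP01 : ∀ v, P v ∈ Icc (0 : ℝ) 1) (hu : Measurable u)
    (hu01 : ∀ v, u v ∈ Icc (0 : ℝ) 1) (hfP : ∫ v, f v ∂μ = ∫ v, P v ∂μ)
    (hPu : ∫ v, P v ∂μ = ∫ v, u v ∂μ) (hu_one : ∀ v, η v ≤ k → u v = 1)
    (hu_zero : ∀ v, k + 2 ≤ η v → u v = 0)
    (hmin : ∫ v, (η v : ℝ) * P v ∂μ ≤ ∫ v, (η v : ℝ) * u v ∂μ)
    (hmid : ∀ v, η v = k + 1 → f v ≤ P v) :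
    ∫ v, |f v - P v| ∂μ ≤ 2 * ∫ v, (η v : ℝ) * (f v - P v) ∂μ := by
  have hf_excess := integral_bathtubExcess_le_integral_mul_sub hη hηi hf hf01 hu hu01
    (hfP.trans hPu) hu_one hu_zero
  have hP_excess := integral_bathtubExcess_le_integral_mul_sub hη hηi hP hP01 hu hu01
    hPu hu_one hu_zero
  rw [integral_mul_sub hηi hf hf01 hu hu01] at hf_excess
  rw [integral_mul_sub hηi hP hP01 hu hu01] at hP_excess
  rw [integral_mul_sub hηi hf hf01 hP hP01]
  linarith [integral_abs_sub_le_two_mul_integral_bathtubExcess hη hf hf01 hP hP01 hfP hmid]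

end Bathtub

lemma floor_div_eq_iff {x ε : ℝ} (hε : 0 < ε) {n : ℤ} :
    ⌊x / ε⌋ = n ↔ n * ε ≤ x ∧ x < (n + 1) * ε := by
  rw [Int.floor_eq_iff, le_div_iff₀ hε, div_lt_iff₀ hε]

theorem setIntegral_abs_sub_le_two_mul_floor_weight {M ε ρ : ℝ} (hε : 0 < ε) (hρ : ρ ∈ Icc 0 M)
    {N : ℕ} (hN : (N : ℤ) = ⌊ρ / ε⌋) {η : ℝ → ℝ} (hη : ∀ v, η v = (⌊v / ε⌋ : ℝ) + 1)
    {f P : ℝ → ℝ} (hf : Measurable f) (hP : Measurable P) (hf01 : ∀ v, f v ∈ Icc (0 : ℝ) 1)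
    (hP01 : ∀ v, P v ∈ Icc (0 : ℝ) 1) (hfρ : (∫ v in Icc (0 : ℝ) M, f v) = ρ)
    (hPρ : (∫ v in Icc (0 : ℝ) M, P v) = ρ)
    (hmin : ∀ g : ℝ → ℝ, Measurable g → (∀ v, g v ∈ Icc (0 : ℝ) 1) →
      (∫ v in Icc (0 : ℝ) M, g v) = ρ →
      (∫ v in Icc (0 : ℝ) M, η v * P v) ≤ ∫ v in Icc (0 : ℝ) M, η v * g v)
    (hmid : ∀ v ∈ Icc ((N : ℝ) * ε) (((N : ℝ) + 1) * ε), f v ≤ P v) :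
    ∫ v in Icc (0 : ℝ) M, |f v - P v| ≤ 2 * ∫ v in Icc (0 : ℝ) M, η v * (f v - P v) := by
  obtain rfl : η = fun v => ((⌊v / ε⌋ + 1 : ℤ) : ℝ) := funext fun v => by rw [hη]; push_cast; rfl
  obtain ⟨hNρ, hρN⟩ := (floor_div_eq_iff hε).1 hN.symm
  push_cast at hNρ hρN
  -- `Nε ≤ ρ < (N + 1)ε`, so `1_{[0, ρ)}` has the bathtub shape for the level `k = N`
  set u : ℝ → ℝ := (Iio ρ).indicator 1
  have hu : Measurable u := measurable_const.indicator measurableSet_Iio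
  have hu01 : ∀ v, u v ∈ Icc (0 : ℝ) 1 := fun v => by
    by_cases hv : v < ρ <;> simp [u, hv]
  have huρ : ∫ v in Icc (0 : ℝ) M, u v = ρ := by
    have hset : Iio ρ ∩ Icc 0 M = Ico 0 ρ := by
      ext v
      simp only [mem_inter_iff, mem_Iio, mem_Icc, mem_Ico]
      exact ⟨fun h => ⟨h.2.1, h.1⟩, fun h => ⟨h.2, h.1, by linarith [hρ.2]⟩⟩
    rw [integral_indicator_one measurableSet_Iio, measureReal_restrict_apply measurableSet_Iio,
      hset, Real.volume_real_Ico_of_le hρ.1, sub_zero]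
  have hmono : Monotone fun v : ℝ => ((⌊v / ε⌋ + 1 : ℤ) : ℝ) := fun x y hxy => by
    simpa using Int.floor_mono (div_le_div_of_nonneg_right hxy hε.le)
  refine integral_abs_sub_le_two_mul_integral_mul_sub (η := fun v => ⌊v / ε⌋ + 1) (k := N)
    ((measurable_id.div_const ε).floor.add_const _)
    ((hmono.monotoneOn _).integrableOn_isCompact isCompact_Icc)
    hf hf01 hP hP01 hu hu01 (hfρ.trans hPρ.symm) (hPρ.trans huρ.symm) ?_ ?_
    (hmin u hu hu01 huρ) ?_
  · intro v hv
    have hvN : v < N * ε := by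
      rw [← div_lt_iff₀ hε]; exact_mod_cast Int.floor_lt.1 (by omega)
    simp [u, show v < ρ by linarith]
  · intro v hv
    have hvN : ((N : ℤ) + 1 : ℝ) * ε ≤ v := by
      rw [← le_div_iff₀ hε]; exact_mod_cast Int.le_floor.1 (by omega)
    push_cast at hvN
    simp [u, show ¬ v < ρ by linarith]
  · intro v hv
    obtain ⟨hNv, hvN⟩ := (floor_div_eq_iff hε).1 (by omega : ⌊v / ε⌋ = N)
    push_cast at hNv hvN
    exact hmid v ⟨hNv, hvN.le⟩

theorem stmt_19_general (M ε : ℝ) (hε : 0 < ε) (hε1 : ε ≤ 1)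
    (ρ : ℝ) (hρ : ρ ∈ Icc 0 M)
    (N : ℕ) (hN : (N : ℤ) = ⌊ρ / ε⌋)
    (η : ℝ → ℝ) (hη : ∀ v, η v = (⌊v / ε⌋ : ℝ) + 1) :
    (∀ (f Pi : ℝ → ℝ) (δ : ℝ), Measurable f → Measurable Pi →
      (∀ v, f v ∈ Icc (0 : ℝ) 1) → (∀ v, Pi v ∈ Icc (0 : ℝ) 1) →
      (∫ v in Icc (0 : ℝ) M, f v) = ρ → (∫ v in Icc (0 : ℝ) M, Pi v) = ρ →
      (∫ v in Icc (0 : ℝ) M, η v * (f v - Pi v)) ≤ δ →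
      (∀ g : ℝ → ℝ, Measurable g → (∀ v, g v ∈ Icc (0 : ℝ) 1) →
        (∫ v in Icc (0 : ℝ) M, g v) = ρ →
        (∫ v in Icc (0 : ℝ) M, η v * Pi v) ≤ ∫ v in Icc (0 : ℝ) M, η v * g v) →
      (∀ v ∈ Icc ((N : ℝ) * ε) (((N : ℝ) + 1) * ε), f v ≤ Pi v) →
      (∫ v in Icc (0 : ℝ) M, |f v - Pi v|) ≤ 3 * δ / ε) ∧
    (∀ (F P : ℕ → ℝ → ℝ), (∀ n, Measurable (F n)) → (∀ n, Measurable (P n)) →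
      (∀ n v, F n v ∈ Icc (0 : ℝ) 1) → (∀ n v, P n v ∈ Icc (0 : ℝ) 1) →
      (∀ n, (∫ v in Icc (0 : ℝ) M, F n v) = ρ) →
      (∀ n, (∫ v in Icc (0 : ℝ) M, P n v) = ρ) →
      (∀ n, ∀ g : ℝ → ℝ, Measurable g → (∀ v, g v ∈ Icc (0 : ℝ) 1) →
        (∫ v in Icc (0 : ℝ) M, g v) = ρ →
        (∫ v in Icc (0 : ℝ) M, η v * P n v) ≤ ∫ v in Icc (0 : ℝ) M, η v * g v) →
      (∀ n, ∀ v ∈ Icc ((N : ℝ) * ε) (((N : ℝ) + 1) * ε), F n v ≤ P n v) →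
      Tendsto (fun n => ∫ v in Icc (0 : ℝ) M, η v * (F n v - P n v)) atTop (nhds 0) →
      Tendsto (fun n => ∫ v in Icc (0 : ℝ) M, |F n v - P n v|) atTop (nhds 0)) := by
  constructor
  · intro f Pi δ hf hPi hf01 hPi01 hfρ hPiρ hδ hmin hmid
    have hL1 := setIntegral_abs_sub_le_two_mul_floor_weight hε hρ hN hη hf hPi hf01 hPi01 hfρ
      hPiρ hmin hmid
    have hL1_nonneg : 0 ≤ ∫ v in Icc (0 : ℝ) M, |f v - Pi v| :=
      integral_nonneg fun v => abs_nonneg _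
    have hε_div : 3 * δ ≤ 3 * δ / ε := le_div_self (by linarith) hε hε1
    linarith
  · intro F P hF hP hF01 hP01 hFρ hPρ hmin hmid hlim
    refine squeeze_zero (fun n => integral_nonneg fun v => abs_nonneg _)
      (fun n => setIntegral_abs_sub_le_two_mul_floor_weight hε hρ hN hη (hF n) (hP n) (hF01 n)
        (hP01 n) (hFρ n) (hPρ n) (hmin n) (hmid n)) ?_
    simpa using hlim.const_mul 2

theorem stmt_19 (M ε : ℝ) (hM : 0 < M) (hε : 0 < ε) (hε1 : ε ≤ 1)
    (ρ : ℝ) (hρ : ρ ∈ Icc 0 M)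
    (N : ℕ) (hN : (N : ℤ) = ⌊ρ / ε⌋) (hNM : ((N : ℝ) + 1) * ε ≤ M)
    (η : ℝ → ℝ) (hη : ∀ v, η v = (⌊v / ε⌋ : ℝ) + 1) :
    (∀ (f Pi : ℝ → ℝ) (δ : ℝ), Measurable f → Measurable Pi →
      (∀ v, f v ∈ Icc (0 : ℝ) 1) → (∀ v, Pi v ∈ Icc (0 : ℝ) 1) →
      (∫ v in Icc (0 : ℝ) M, f v) = ρ → (∫ v in Icc (0 : ℝ) M, Pi v) = ρ →
      (∫ v in Icc (0 : ℝ) M, η v * (f v - Pi v)) ≤ δ →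
      (∀ g : ℝ → ℝ, Measurable g → (∀ v, g v ∈ Icc (0 : ℝ) 1) →
        (∫ v in Icc (0 : ℝ) M, g v) = ρ →
        (∫ v in Icc (0 : ℝ) M, η v * Pi v) ≤ ∫ v in Icc (0 : ℝ) M, η v * g v) →
      (∀ v ∈ Icc ((N : ℝ) * ε) (((N : ℝ) + 1) * ε), f v ≤ Pi v) →
      (∫ v in Icc (0 : ℝ) M, |f v - Pi v|) ≤ 3 * δ / ε) ∧
    (∀ (F P : ℕ → ℝ → ℝ), (∀ n, Measurable (F n)) → (∀ n, Measurable (P n)) →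
      (∀ n v, F n v ∈ Icc (0 : ℝ) 1) → (∀ n v, P n v ∈ Icc (0 : ℝ) 1) →
      (∀ n, (∫ v in Icc (0 : ℝ) M, F n v) = ρ) →
      (∀ n, (∫ v in Icc (0 : ℝ) M, P n v) = ρ) →
      (∀ n, ∀ g : ℝ → ℝ, Measurable g → (∀ v, g v ∈ Icc (0 : ℝ) 1) →
        (∫ v in Icc (0 : ℝ) M, g v) = ρ →
        (∫ v in Icc (0 : ℝ) M, η v * P n v) ≤ ∫ v in Icc (0 : ℝ) M, η v * g v) →
      (∀ n, ∀ v ∈ Icc ((N : ℝ) * ε) (((N : ℝ) + 1) * ε), F n v ≤ P n v) →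
      Tendsto (fun n => ∫ v in Icc (0 : ℝ) M, η v * (F n v - P n v)) atTop (nhds 0) →
      Tendsto (fun n => ∫ v in Icc (0 : ℝ) M, |F n v - P n v|) atTop (nhds 0)) :=
  stmt_19_general M ε hε hε1 ρ hρ N hN η hη
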